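/- The function G(z) := (1/z)·Log(1 + (1+i)·F(z)) is analytic on the open first quadrant Q = {z ∈ ℂ : Re z > 0, Im z > 0}, where F(z) := (1/(2π))·(Log((1+z)/(1−z)) + i·Log((1+iz)/(1−iz))). -/

import Mathlib

/-!
Both Cayley quotients `w₁ = (1+z)/(1-z)` and `w₂ = (1+iz)/(1-iz)` lie in the upper half-plane when
`z` is in the first quadrant, so their logarithms are holomorphic there and their arguments lie in
`(0, π)`. Moreover `‖w₂‖ ≤ 1 ≤ ‖w₁‖`, since `‖1+w‖² - ‖1-w‖² = 4 Re w`. Hence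
`2π · Re((1+i)F(z)) = log‖w₁‖ - log‖w₂‖ - arg w₁ - arg w₂ > -2π`, i.e. `1 + (1+i)F(z)` has positive
real part, and `G` is a product of holomorphic functions on the (open) quadrant.
-/

open Complex

noncomputable def F (z : ℂ) : ℂ :=
  (1 / (2 * (Real.pi : ℂ))) *
    (Complex.log ((1 + z) / (1 - z)) + Complex.I * Complex.log ((1 + Complex.I * z) / (1 - Complex.I * z)))

noncomputable def G (z : ℂ) : ℂ := (1 / z) * Complex.log (1 + (1 + Complex.I) * F z)

lemma one_sub_ne_zero_of_im_ne_zero {z : ℂ} (hz : z.im ≠ 0) : 1 - z ≠ 0 := by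
  intro h
  rw [← eq_of_sub_eq_zero h] at hz
  simp at hz

lemma im_div_one_sub_pos {z : ℂ} (hz : 0 < z.im) : 0 < ((1 + z) / (1 - z)).im := by
  have hn : 0 < normSq (1 - z) := normSq_pos.2 (one_sub_ne_zero_of_im_ne_zero hz.ne')
  rw [div_im, ← sub_div]
  apply div_pos _ hn
  simp only [add_im, add_re, sub_re, sub_im, one_re, one_im]
  nlinarith

lemma norm_one_sub_le_norm_one_add {w : ℂ} (hw : 0 ≤ w.re) : ‖1 - w‖ ≤ ‖1 + w‖ := by
  rw [← sq_le_sq₀ (norm_nonneg _) (norm_nonneg _), Complex.sq_norm, Complex.sq_norm, normSq_apply, normSq_apply]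
  simp only [add_re, add_im, sub_re, sub_im, one_re, one_im]
  nlinarith

lemma norm_one_add_le_norm_one_sub {w : ℂ} (hw : w.re ≤ 0) : ‖1 + w‖ ≤ ‖1 - w‖ := by
  simpa [← sub_eq_add_neg] using norm_one_sub_le_norm_one_add (w := -w) (by simpa using hw)

lemma differentiableAt_log_div_one_sub {z : ℂ} (hz : 0 < z.im) :
    DifferentiableAt ℂ (fun w ↦ log ((1 + w) / (1 - w))) z :=
  ((differentiableAt_id.const_add 1).div (differentiableAt_id.const_sub 1)
    (one_sub_ne_zero_of_im_ne_zero hz.ne')).clog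
    (mem_slitPlane_iff.2 (Or.inr (im_div_one_sub_pos hz).ne'))

lemma F_differentiableAt {z : ℂ} (hre : 0 < z.re) (him : 0 < z.im) : DifferentiableAt ℂ F z := by
  have hIz : 0 < (I * z).im := by simpa using hre
  have hlog₂ : DifferentiableAt ℂ (fun w ↦ log ((1 + I * w) / (1 - I * w))) z :=
    (differentiableAt_log_div_one_sub hIz).comp z (differentiableAt_id.const_mul I)
  exact ((differentiableAt_log_div_one_sub him).add (hlog₂.const_mul I)).const_mul _

lemma re_one_add_one_add_I_mul_F (z : ℂ) :
    (1 + (1 + I) * F z).re = 1 + (Real.log ‖(1 + z) / (1 - z)‖ - Real.log ‖(1 + I * z) / (1 - I * z)‖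
      - arg ((1 + z) / (1 - z)) - arg ((1 + I * z) / (1 - I * z))) / (2 * Real.pi) := by
  have hπ : (1 : ℂ) / (2 * Real.pi) = ((2 * Real.pi)⁻¹ : ℝ) := by push_cast; ring
  rw [F, hπ]
  simp only [add_re, one_re, mul_re, mul_im, add_im, one_im, I_re, I_im, ofReal_re, ofReal_im,
    log_re, log_im]
  field_simp
  ring

lemma re_one_add_one_add_I_mul_F_pos {z : ℂ} (hre : 0 < z.re) (him : 0 < z.im) :
    0 < (1 + (1 + I) * F z).re := by
  have hIz : 0 < (I * z).im := by simpa using hre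
  have harg₁ := arg_lt_pi_iff.2 (Or.inr (im_div_one_sub_pos him).ne')
  have harg₂ := arg_lt_pi_iff.2 (Or.inr (im_div_one_sub_pos hIz).ne')
  have hlog₁ : 0 ≤ Real.log ‖(1 + z) / (1 - z)‖ := by
    refine Real.log_nonneg ?_
    rw [norm_div, one_le_div (norm_pos_iff.2 (one_sub_ne_zero_of_im_ne_zero him.ne'))]
    exact norm_one_sub_le_norm_one_add hre.le
  have hlog₂ : Real.log ‖(1 + I * z) / (1 - I * z)‖ ≤ 0 := by
    refine Real.log_nonpos (norm_nonneg _) ?_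
    rw [norm_div]
    exact div_le_one_of_le₀ (norm_one_add_le_norm_one_sub (by simpa using him.le)) (norm_nonneg _)
  rw [re_one_add_one_add_I_mul_F]
  have : -1 < (Real.log ‖(1 + z) / (1 - z)‖ - Real.log ‖(1 + I * z) / (1 - I * z)‖
      - arg ((1 + z) / (1 - z)) - arg ((1 + I * z) / (1 - I * z))) / (2 * Real.pi) := by
    rw [lt_div_iff₀ (by positivity)]
    linarith
  linarith

/-- `G` is analytic on the open first quadrant. -/
theorem G_analyticOnNhd_first_quadrant :
    AnalyticOnNhd ℂ G {z : ℂ | 0 < z.re ∧ 0 < z.im} := by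
  have hQ : IsOpen {z : ℂ | 0 < z.re ∧ 0 < z.im} :=
    (isOpen_lt continuous_const continuous_re).inter (isOpen_lt continuous_const continuous_im)
  refine DifferentiableOn.analyticOnNhd (fun z ⟨hre, him⟩ ↦ ?_) hQ
  have hz : z ≠ 0 := fun h ↦ by simp [h] at hre
  have hlog : DifferentiableAt ℂ (fun w ↦ log (1 + (1 + I) * F w)) z :=
    (((F_differentiableAt hre him).const_mul _).const_add 1).clog
      (mem_slitPlane_iff.2 (Or.inl (re_one_add_one_add_I_mul_F_pos hre him)))
  exact (((differentiableAt_const 1).div differentiableAt_id hz).mul hlog).differentiableWithinAt
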